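/- Let k, N be natural numbers with 1 ≤ k < N, n := N − k, and assume kn ≥ 2. Then in Λ(V): (tr Φ)^{kn−2} ∧ ((tr Φ)² − tr(Φ²)) = (kn−2)! · n · (n+1) · k · (k−1) · T. (Equivalently, with τ₂ := ½((tr Φ)² − tr(Φ²)) the second coefficient of det(I + tΦ), this states ∫_{G(k,N)} (σ₁^∨)^{kN−k²−2} σ_{1,1}^∨ = ½ (kN−k²−2)! (N−k)(N−k+1) k(k−1) · (∏_{j=0}^{k−1} j!)/(∏_{j=N−k}^{N−1} j!).) -/

import Mathlib

/-!
Each `ψ_s^i ψ̄_s^j` has degree two, hence is central in `Λ(V)`, so the computation takes place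
in a commutative ring. There `tr Φ` is the sum of the `kn` square-zero elements
`x_{s,i} = ψ_s^i ψ̄_s^i`, whose product is `T`; with `m = kn - 2` this gives
`(tr Φ)^m x_a x_b = m! T` for `a ≠ b`. Expanding `tr(Φ²) = ∑ ψ_s^i ψ̄_s^j ψ_t^j ψ̄_t^i`, the
terms with `i = j` are `x_{s,i} x_{t,i}`, those with `s = t` are `-x_{s,j} x_{s,i}`, and the rest
are killed by `(tr Φ)^m`. Counting gives `nk(nk - 1) - kn(n - 1) + k(k - 1)n = nk(n + 1)(k - 1)`.
-/

noncomputable section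

/-- The real vector space with basis `ψ_s^j` (inl) and `ψ̄_s^j` (inr),
    `1 ≤ s ≤ n`, `1 ≤ j ≤ k`. -/
abbrev V (k n : ℕ) : Type := ((Fin n × Fin k) ⊕ (Fin n × Fin k)) → ℝ

/-- The fermionic variable `ψ_s^j` as a degree-1 element of the exterior algebra. -/
def ψ (k n : ℕ) (s : Fin n) (j : Fin k) : ExteriorAlgebra ℝ (V k n) :=
  ExteriorAlgebra.ι ℝ (Pi.single (Sum.inl (s, j)) (1 : ℝ))

/-- The fermionic variable `ψ̄_s^j` as a degree-1 element of the exterior algebra. -/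
def ψb (k n : ℕ) (s : Fin n) (j : Fin k) : ExteriorAlgebra ℝ (V k n) :=
  ExteriorAlgebra.ι ℝ (Pi.single (Sum.inr (s, j)) (1 : ℝ))

/-- `ω^{ij} = ∑_{s=1}^n ψ_s^i ∧ ψ̄_s^j`. -/
def ω (k n : ℕ) (i j : Fin k) : ExteriorAlgebra ℝ (V k n) :=
  ∑ s : Fin n, ψ k n s i * ψb k n s j

/-- `tr Φ = ∑_{i=1}^k ω^{ii}`. -/
def trPhi (k n : ℕ) : ExteriorAlgebra ℝ (V k n) :=
  ∑ i : Fin k, ω k n i i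

/-- `tr(Φ²) = ∑_{i,j=1}^k ω^{ij} ∧ ω^{ji}`. -/
def trPhi2 (k n : ℕ) : ExteriorAlgebra ℝ (V k n) :=
  ∑ i : Fin k, ∑ j : Fin k, ω k n i j * ω k n j i

/-- The top-degree generator `T = ∧_{s=1}^n (ψ_s^1 ∧ ψ̄_s^1 ∧ ⋯ ∧ ψ_s^k ∧ ψ̄_s^k)`. -/
def T (k n : ℕ) : ExteriorAlgebra ℝ (V k n) :=
  ((List.finRange n).map (fun s =>
    ((List.finRange k).map (fun j => ψ k n s j * ψb k n s j)).prod)).prod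

namespace ExteriorAlgebra

variable {R M : Type*} [CommRing R] [AddCommGroup M] [Module R M]

theorem ι_mul_ι_swap (x y : M) : ι R x * ι R y = -(ι R y * ι R x) :=
  eq_neg_of_add_eq_zero_left (ι_add_mul_swap x y)

theorem ι_mul_ι_mul_swap (x y : M) (z : ExteriorAlgebra R M) :
    ι R x * (ι R y * z) = -(ι R y * (ι R x * z)) := by
  rw [← mul_assoc, ι_mul_ι_swap, neg_mul, mul_assoc]

theorem ι_mul_ι_mul_ι_mul_ι_same_left (a b c : M) :
    ι R a * ι R b * (ι R a * ι R c) = 0 := by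
  rw [mul_assoc, ι_mul_ι_mul_swap b a, mul_neg, ← mul_assoc, ι_sq_zero, zero_mul, neg_zero]

theorem ι_mul_ι_mul_ι_mul_ι_same_right (a b c : M) :
    ι R a * ι R b * (ι R c * ι R b) = 0 := by
  rw [mul_assoc, ι_mul_ι_mul_swap b c, ι_sq_zero, mul_zero, neg_zero, mul_zero]

theorem ι_mul_ι_mul_ι_mul_ι_swap_left (a b c d : M) :
    ι R a * ι R b * (ι R c * ι R d) = -(ι R c * ι R b * (ι R a * ι R d)) := by
  rw [mul_assoc, ι_mul_ι_mul_swap b c, mul_neg, ι_mul_ι_mul_swap a c, neg_neg,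
    ι_mul_ι_mul_swap a b, mul_neg, mul_assoc]

theorem ι_mul_ι_mem_center (x y : M) : ι R x * ι R y ∈ Subring.center (ExteriorAlgebra R M) := by
  rw [Subring.mem_center_iff]
  intro z
  induction z using ExteriorAlgebra.induction with
  | algebraMap r => exact Algebra.commutes r _
  | ι z => rw [← mul_assoc, ι_mul_ι_swap z x, neg_mul, mul_assoc, ι_mul_ι_swap z y, mul_neg,
      neg_neg, mul_assoc]
  | mul a b ha hb => rw [mul_assoc, hb, ← mul_assoc, ha, mul_assoc]
  | add a b ha hb => rw [add_mul, mul_add, ha, hb]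

end ExteriorAlgebra

section SquareZero

open scoped Nat

variable {R ι : Type*} [CommRing R]

theorem add_pow_mul_of_mul_eq_zero {x z : R} (h : x * z = 0) (y : R) (m : ℕ) :
    (x + y) ^ m * z = y ^ m * z := by
  induction m with
  | zero => simp
  | succ m ih =>
    rw [pow_succ, mul_assoc, add_mul, h, zero_add, mul_comm y z, ← mul_assoc, ih]
    ring

theorem add_pow_succ_of_mul_self_eq_zero {x : R} (hx : x * x = 0) (y : R) (m : ℕ) :
    (x + y) ^ (m + 1) = y ^ (m + 1) + (m + 1) • (x * y ^ m) := by
  induction m with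
  | zero => simp [add_comm]
  | succ m ih =>
    rw [pow_succ, ih]
    simp only [nsmul_eq_mul]
    push_cast
    linear_combination (((m : R) + 1) * y ^ m) * hx

namespace Finset

variable [DecidableEq ι] {f : ι → R} {s : Finset ι}

theorem prod_mul_eq_zero_of_mul_self_eq_zero (h : ∀ i ∈ s, f i * f i = 0) {j : ι} (hj : j ∈ s) :
    (∏ i ∈ s, f i) * f j = 0 := by
  rw [← mul_prod_erase s f hj, mul_right_comm, h j hj, zero_mul]

theorem sum_pow_card_of_mul_self_eq_zero (h : ∀ i ∈ s, f i * f i = 0) :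
    (∑ i ∈ s, f i) ^ #s = (#s)! • ∏ i ∈ s, f i := by
  induction s using Finset.induction_on with
  | empty => simp
  | insert a s ha ih =>
    have hs : ∀ i ∈ s, f i * f i = 0 := fun i hi => h i (mem_insert_of_mem hi)
    have hvanish : (∑ i ∈ s, f i) ^ (#s + 1) = 0 := by
      rw [pow_succ, ih hs, smul_mul_assoc, mul_sum,
        sum_eq_zero fun i hi => prod_mul_eq_zero_of_mul_self_eq_zero hs hi, smul_zero]
    rw [sum_insert ha, card_insert_of_notMem ha,
      add_pow_succ_of_mul_self_eq_zero (h a (mem_insert_self a s)), hvanish, zero_add, ih hs,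
      mul_smul_comm, smul_smul, prod_insert ha, Nat.factorial_succ]

theorem sum_pow_eq_zero_of_card_lt (h : ∀ i ∈ s, f i * f i = 0) {m : ℕ} (hm : #s < m) :
    (∑ i ∈ s, f i) ^ m = 0 := by
  obtain ⟨j, rfl⟩ : ∃ j, m = #s + 1 + j := ⟨m - (#s + 1), by omega⟩
  rw [pow_add, pow_succ (∑ i ∈ s, f i) #s, sum_pow_card_of_mul_self_eq_zero h, smul_mul_assoc,
    mul_sum, sum_eq_zero fun i hi => prod_mul_eq_zero_of_mul_self_eq_zero h hi, smul_zero, zero_mul]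

/-- All but the two factors `f a`, `f b` must come from the power, in any of `m!` orders. -/
theorem sum_pow_mul_mul_of_mul_self_eq_zero (h : ∀ i ∈ s, f i * f i = 0) {a b : ι}
    (ha : a ∈ s) (hb : b ∈ s) (hab : a ≠ b) {m : ℕ} (hm : #s = m + 2) :
    (∑ i ∈ s, f i) ^ m * (f a * f b) = m ! • ∏ i ∈ s, f i := by
  set t := (s.erase a).erase b with ht_def
  have hbt : b ∈ s.erase a := mem_erase.2 ⟨hab.symm, hb⟩
  have hcard : #t = m := by
    rw [card_erase_of_mem hbt, card_erase_of_mem ha, hm]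
    rfl
  have hsplit : ∑ i ∈ s, f i = (f a + f b) + ∑ i ∈ t, f i := by
    rw [← add_sum_erase s f ha, ← add_sum_erase _ f hbt, add_assoc]
  have hab0 : (f a + f b) * (f a * f b) = 0 := by
    linear_combination f b * h a ha + f a * h b hb
  have ht : ∀ i ∈ t, f i * f i = 0 := fun i hi => h i (mem_of_mem_erase (mem_of_mem_erase hi))
  rw [hsplit, add_pow_mul_of_mul_eq_zero hab0, ← hcard, sum_pow_card_of_mul_self_eq_zero ht,
    smul_mul_assoc, ← mul_prod_erase s f ha, ← mul_prod_erase _ f hbt, ← ht_def]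
  ring

theorem sum_pow_mul_eq_zero_of_card_sdiff_lt (h : ∀ i ∈ s, f i * f i = 0) {C : Finset ι}
    (hC : C ⊆ s) {z : R} (hz : ∀ c ∈ C, f c * z = 0) {m : ℕ} (hm : #(s \ C) < m) :
    (∑ i ∈ s, f i) ^ m * z = 0 := by
  have hCz : (∑ i ∈ C, f i) * z = 0 := by
    rw [sum_mul]
    exact sum_eq_zero hz
  rw [← sum_sdiff hC, add_comm, add_pow_mul_of_mul_eq_zero hCz,
    sum_pow_eq_zero_of_card_lt (fun i hi => h i (mem_sdiff.1 hi).1) hm, zero_mul]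

end Finset

end SquareZero

theorem Fintype.sum_sum_ite_eq {M β : Type*} [AddCommGroup M] [Fintype β] [DecidableEq β]
    (x y : M) :
    ∑ i : β, ∑ j : β, (if i = j then x else y) = card β • (x - y) + (card β * card β) • y := by
  have h (i j : β) : (if i = j then x else y) = (if i = j then x - y else 0) + y := by
    split_ifs <;> simp
  simp only [h, Finset.sum_add_distrib, Finset.sum_ite_eq, Finset.mem_univ, if_true,
    Finset.sum_const, Finset.card_univ, mul_smul]

section FermionPairs

open scoped Nat

variable {R σ κ : Type*} [CommRing R]

/-- The relations satisfied by `g s i j := ψ_s^i ψ̄_s^j` in an exterior algebra. -/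
structure FermionPairRelations (g : σ → κ → κ → R) : Prop where
  mul_same_fst : ∀ s i j j', g s i j * g s i j' = 0
  mul_same_snd : ∀ s i i' j, g s i j * g s i' j = 0
  mul_transpose : ∀ s i j, g s i j * g s j i = -(g s j j * g s i i)

def pairDiag (g : σ → κ → κ → R) (a : σ × κ) : R := g a.1 a.2 a.2

theorem FermionPairRelations.pairDiag_mul_self {g : σ → κ → κ → R} (hg : FermionPairRelations g)
    (a : σ × κ) : pairDiag g a * pairDiag g a = 0 :=
  hg.mul_same_fst _ _ _ _

variable [Fintype σ] [Fintype κ]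

def pairMatrix (g : σ → κ → κ → R) : Matrix κ κ R := Matrix.of fun i j => ∑ s, g s i j

theorem trace_pairMatrix (g : σ → κ → κ → R) : (pairMatrix g).trace = ∑ a, pairDiag g a := by
  rw [Fintype.sum_prod_type, Finset.sum_comm]
  rfl

theorem trace_pairMatrix_mul_self (g : σ → κ → κ → R) :
    (pairMatrix g * pairMatrix g).trace = ∑ i, ∑ j, (∑ s, g s i j) * (∑ t, g t j i) :=
  rfl

variable [DecidableEq σ] [DecidableEq κ] {g : σ → κ → κ → R}

namespace FermionPairRelations

theorem sum_pairDiag_pow_mul_pairDiag_mul (hg : FermionPairRelations g) {m : ℕ}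
    (hm : Fintype.card σ * Fintype.card κ = m + 2) (a b : σ × κ) :
    (∑ c, pairDiag g c) ^ m * (pairDiag g a * pairDiag g b) =
      if a = b then 0 else m ! • ∏ c, pairDiag g c := by
  split_ifs with hab
  · rw [hab, hg.pairDiag_mul_self, mul_zero]
  · exact Finset.sum_pow_mul_mul_of_mul_self_eq_zero (fun c _ => hg.pairDiag_mul_self c)
      (Finset.mem_univ a) (Finset.mem_univ b) hab (by simpa using hm)

/-- For `i ≠ j` and `s ≠ t` the product is annihilated by the four diagonal pairs at
`(s, i), (s, j), (t, i), (t, j)`, which leaves too few factors for the power. -/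
theorem sum_pairDiag_pow_mul_mul (hg : FermionPairRelations g) {m : ℕ}
    (hm : Fintype.card σ * Fintype.card κ = m + 2) (s t : σ) (i j : κ) :
    (∑ c, pairDiag g c) ^ m * (g s i j * g t j i) =
      if i = j then (if s = t then 0 else m ! • ∏ c, pairDiag g c)
      else (if s = t then -(m ! • ∏ c, pairDiag g c) else 0) := by
  have key := hg.sum_pairDiag_pow_mul_pairDiag_mul hm
  split_ifs with hij hst hst
  · subst hij hst
    rw [hg.mul_same_fst, mul_zero]
  · subst hij
    exact (key (s, i) (t, i)).trans (if_neg fun h => hst (congrArg Prod.fst h))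
  · subst hst
    rw [hg.mul_transpose, mul_neg]
    exact congrArg Neg.neg
      ((key (s, j) (s, i)).trans (if_neg fun h => hij (congrArg Prod.snd h).symm))
  · set C : Finset (σ × κ) := {(s, i), (s, j), (t, i), (t, j)}
    have hC : C.card = 4 := by
      simp [C, Finset.card_insert_of_notMem, hij, hst, Ne.symm hij]
    refine Finset.sum_pow_mul_eq_zero_of_card_sdiff_lt (fun c _ => hg.pairDiag_mul_self c)
      (Finset.subset_univ C) ?_ ?_
    · intro c hc
      simp only [C, Finset.mem_insert, Finset.mem_singleton] at hc
      rcases hc with rfl | rfl | rfl | rfl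
      · show g s i i * _ = 0
        rw [← mul_assoc, hg.mul_same_fst, zero_mul]
      · show g s j j * _ = 0
        rw [← mul_assoc, hg.mul_same_snd, zero_mul]
      · show g t i i * _ = 0
        rw [mul_left_comm, hg.mul_same_snd, mul_zero]
      · show g t j j * _ = 0
        rw [mul_left_comm, hg.mul_same_fst, mul_zero]
    · have hCle : 4 ≤ m + 2 := by simpa [hC, hm] using Finset.card_le_univ C
      rw [Finset.card_sdiff_of_subset (Finset.subset_univ C), hC, Finset.card_univ,
        Fintype.card_prod, hm]
      omega

theorem trace_pow_mul_sq_sub_trace_mul_self (hg : FermionPairRelations g) {m : ℕ}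
    (hm : Fintype.card σ * Fintype.card κ = m + 2) :
    (pairMatrix g).trace ^ m * ((pairMatrix g).trace ^ 2 - (pairMatrix g * pairMatrix g).trace) =
      ((m ! * (Fintype.card σ * (Fintype.card σ + 1) * Fintype.card κ * (Fintype.card κ - 1)) :
        ℤ)) • ∏ c, pairDiag g c := by
  set n : ℤ := (Fintype.card σ : ℤ)
  set k : ℤ := (Fintype.card κ : ℤ)
  set e := m ! • ∏ c, pairDiag g c
  have hsq : (∑ a, pairDiag g a) ^ m * (∑ a, pairDiag g a) ^ 2 = (n * k * (n * k - 1)) • e := by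
    rw [sq, Finset.sum_mul_sum]
    simp only [Finset.mul_sum, hg.sum_pairDiag_pow_mul_pairDiag_mul hm]
    rw [Fintype.sum_sum_ite_eq, Fintype.card_prod]
    module
  have htr : (∑ a, pairDiag g a) ^ m * ∑ i, ∑ j, (∑ s, g s i j) * (∑ t, g t j i) =
      (k * n * (n - 1) - k * (k - 1) * n) • e := by
    simp only [Finset.sum_mul_sum]
    simp only [Finset.mul_sum, hg.sum_pairDiag_pow_mul_mul hm, Finset.sum_ite_irrel,
      Fintype.sum_sum_ite_eq]
    module
  rw [trace_pairMatrix_mul_self, trace_pairMatrix, mul_sub, hsq, htr]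
  module

end FermionPairRelations

end FermionPairs

section Transfer

open ExteriorAlgebra

def psiPair (k n : ℕ) (s : Fin n) (i j : Fin k) :
    Subring.center (ExteriorAlgebra ℝ (V k n)) :=
  ⟨ψ k n s i * ψb k n s j, ι_mul_ι_mem_center _ _⟩

theorem fermionPairRelations_psiPair (k n : ℕ) : FermionPairRelations (psiPair k n) where
  mul_same_fst _ _ _ _ := Subtype.ext (ι_mul_ι_mul_ι_mul_ι_same_left _ _ _)
  mul_same_snd _ _ _ _ := Subtype.ext (ι_mul_ι_mul_ι_mul_ι_same_right _ _ _)
  mul_transpose _ _ _ := Subtype.ext (ι_mul_ι_mul_ι_mul_ι_swap_left _ _ _ _)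

theorem trPhi_eq_trace_pairMatrix (k n : ℕ) :
    trPhi k n = (Subring.center _).subtype (pairMatrix (psiPair k n)).trace := by
  simp only [trPhi, ω, Matrix.trace, Matrix.diag, pairMatrix, Matrix.of_apply, map_sum]
  rfl

theorem trPhi2_eq_trace_pairMatrix_mul_self (k n : ℕ) :
    trPhi2 k n =
      (Subring.center _).subtype (pairMatrix (psiPair k n) * pairMatrix (psiPair k n)).trace := by
  simp only [trPhi2, ω, trace_pairMatrix_mul_self, map_sum, map_mul]
  rfl

theorem T_eq_prod_pairDiag (k n : ℕ) :
    T k n = (Subring.center _).subtype (∏ c, pairDiag (psiPair k n) c) := by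
  rw [T, Fintype.prod_prod_type]
  simp only [Fin.prod_univ_def, map_list_prod, List.map_map, Function.comp_def]
  rfl

end Transfer

theorem tau2_eval_general (k n : ℕ) (hkn : 2 ≤ k * n) :
    (trPhi k n) ^ (k * n - 2) * ((trPhi k n) ^ 2 - trPhi2 k n) =
      (((k * n - 2).factorial : ℝ) * (n : ℝ) * ((n : ℝ) + 1) * (k : ℝ) * ((k : ℝ) - 1)) •
        T k n := by
  obtain ⟨m, hm⟩ : ∃ m, k * n = m + 2 := ⟨k * n - 2, by omega⟩
  have hcard : Fintype.card (Fin n) * Fintype.card (Fin k) = m + 2 := by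
    simpa [mul_comm] using hm
  have key := congrArg (Subring.center (ExteriorAlgebra ℝ (V k n))).subtype
    ((fermionPairRelations_psiPair k n).trace_pow_mul_sq_sub_trace_mul_self hcard)
  simp only [map_mul, map_pow, map_sub, map_zsmul, ← trPhi_eq_trace_pairMatrix,
    ← trPhi2_eq_trace_pairMatrix_mul_self, ← T_eq_prod_pairDiag] at key
  rw [hm, Nat.add_sub_cancel, key, ← Int.cast_smul_eq_zsmul ℝ]
  congr 1
  push_cast [Fintype.card_fin]
  ring

/-- `(tr Φ)^{kn−2} ∧ ((tr Φ)² − tr(Φ²)) = (kn−2)! · n(n+1)k(k−1) · T`,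
i.e. `∫ (σ₁^∨)^{kN−k²−2} σ_{1,1}^∨ = ½(kN−k²−2)!(N−k)(N−k+1)k(k−1) ∏_{j<k} j!/∏_{j=N−k}^{N−1} j!`. -/
theorem tau2_eval (k N n : ℕ) (hk : 1 ≤ k) (hN : k < N) (hn : n = N - k)
    (hkn : 2 ≤ k * n) :
    (trPhi k n) ^ (k * n - 2) * ((trPhi k n) ^ 2 - trPhi2 k n) =
      (((k * n - 2).factorial : ℝ) * (n : ℝ) * ((n : ℝ) + 1) * (k : ℝ) * ((k : ℝ) - 1)) •
        T k n :=
  tau2_eval_general k n hkn
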